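/- arXiv:1506.07641 — 2 statements merged into one kernel-verified Lean document; each statement's English description precedes it below -/
import Mathlib

section
/- There exist smooth vector fields a_α, D_α, d : ω → ℝ³ (α ∈ {1,2}) with a₁×a₂ ≠ 0 everywhere and d·(a₁×a₂) ≠ 0 everywhere, such that: a_α·a_β = a_{αβ}; D_α = (Λ_{σα} − B_{σα})a^σ + Λ_α n; and d = Δ_σ a^σ + (Δ+1)n, where a^σ := a^{σβ}a_β and n := (a₁×a₂)/|a₁×a₂|. Moreover, the vector fields ĝ_α(θ,ζ) := a_α(θ) + ζD_α(θ) and ĝ_3(θ,ζ) := d(θ) satisfy ĝ_i·ĝ_j = g_{ij} at every point of Ω, where g_{ij} is the shell metric. -/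
open Set
open scoped BigOperators

noncomputable section

/-- Euclidean dot product on ℝ³. -/
def dot3 (u v : Fin 3 → ℝ) : ℝ := ∑ m, u m * v m

/-- Cross product on ℝ³. -/
def cross3 (u v : Fin 3 → ℝ) : Fin 3 → ℝ :=
  ![u 1 * v 2 - u 2 * v 1, u 2 * v 0 - u 0 * v 2, u 0 * v 1 - u 1 * v 0]

/-- Euclidean norm on ℝ³. -/
def norm3 (u : Fin 3 → ℝ) : ℝ := Real.sqrt (dot3 u u)

/-- Partial derivative of a scalar field on ℝ². -/
def pd2 (α : Fin 2) (f : (Fin 2 → ℝ) → ℝ) (θ : Fin 2 → ℝ) : ℝ :=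
  fderiv ℝ f θ (Pi.single α 1)

/-- Partial derivative of a vector field on ℝ². -/
def vpd2 (α : Fin 2) (f : (Fin 2 → ℝ) → (Fin 3 → ℝ)) (θ : Fin 2 → ℝ) : Fin 3 → ℝ :=
  fderiv ℝ f θ (Pi.single α 1)

/-!
The frame `a_α` is built explicitly: the rows of the Cholesky factor of `a_{αβ}`, placed in the
plane `x₃ = 0`, so that `n = e₃`. Expanding `D_α` and `d` in the dual frame `a^σ` and `n`, each
`ĝ_i · ĝ_j` is a polynomial in `ζ` whose coefficients follow from `a_α · a^σ = δ_α^σ`,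
`a^σ · a^γ = a^{σγ}`, `a^σ · n = 0` and `n · n = 1`. The only geometric input is the symmetry of
`B_{αβ} = N · ∂_β ∂_α R` (differentiate `A_α · N = 0`), which turns `a_α · D_β + D_α · a_β` into
`P_{αβ}`.
-/

open Matrix

theorem dotProduct_add_smul_add_smul {m K : Type*} [Fintype m] [CommRing K]
    (x y x' y' : m → K) (ζ : K) :
    (x + ζ • y) ⬝ᵥ (x' + ζ • y') = x ⬝ᵥ x' + ζ * (x ⬝ᵥ y' + y ⬝ᵥ x') + ζ ^ 2 * (y ⬝ᵥ y') := by
  simp only [add_dotProduct, dotProduct_add, smul_dotProduct, dotProduct_smul, smul_eq_mul]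
  ring

theorem vecCons_three_gram {m K : Type*} [Fintype m] [CommRing K] {x : Fin 2 → m → K}
    {z : m → K} {g : Matrix (Fin 3) (Fin 3) K}
    (hxx : ∀ α β, x α ⬝ᵥ x β = g α.castSucc β.castSucc) (hxz : ∀ α, x α ⬝ᵥ z = g α.castSucc 2)
    (hzx : ∀ α, z ⬝ᵥ x α = g 2 α.castSucc) (hzz : z ⬝ᵥ z = g 2 2) (i j : Fin 3) :
    ![x 0, x 1, z] i ⬝ᵥ ![x 0, x 1, z] j = g i j := by
  fin_cases i <;> fin_cases j
  exacts [hxx 0 0, hxx 0 1, hxz 0, hxx 1 0, hxx 1 1, hxz 1, hzx 0, hzx 1, hzz]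

section DualFrame

variable {ι m K : Type*} [Fintype ι] [DecidableEq ι] [Fintype m] [CommRing K]
  {G : Matrix ι ι K} {a : ι → m → K}

def dualFrame (G : Matrix ι ι K) (a : ι → m → K) (σ : ι) : m → K :=
  ∑ β, G⁻¹ σ β • a β

theorem dualFrame_dotProduct (hGram : ∀ α β, a α ⬝ᵥ a β = G α β) (hG : IsUnit G.det)
    (σ β : ι) : dualFrame G a σ ⬝ᵥ a β = (1 : Matrix ι ι K) σ β := by
  simp only [dualFrame, sum_dotProduct, smul_dotProduct, hGram, smul_eq_mul]
  rw [← Matrix.mul_apply, nonsing_inv_mul G hG]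

theorem dualFrame_dotProduct_dualFrame (hGram : ∀ α β, a α ⬝ᵥ a β = G α β)
    (hG : IsUnit G.det) (σ γ : ι) : dualFrame G a σ ⬝ᵥ dualFrame G a γ = G⁻¹ σ γ := by
  conv_lhs => rw [dualFrame]
  simp only [sum_dotProduct, smul_dotProduct, dotProduct_comm (a _),
    dualFrame_dotProduct hGram hG, one_apply, smul_eq_mul, mul_ite, mul_one, mul_zero,
    Finset.sum_ite_eq, Finset.mem_univ, if_true]

def frameVector (G : Matrix ι ι K) (a : ι → m → K) (n : m → K) (c : ι → K) (l : K) : m → K :=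
  ∑ σ, c σ • dualFrame G a σ + l • n

theorem frameVector_dotProduct_of_forall_dotProduct_eq_zero {w : m → K}
    (hw : ∀ β, a β ⬝ᵥ w = 0) (n : m → K) (c : ι → K) (l : K) :
    frameVector G a n c l ⬝ᵥ w = l * (n ⬝ᵥ w) := by
  simp [frameVector, dualFrame, add_dotProduct, sum_dotProduct, hw]

theorem dotProduct_frameVector (hGram : ∀ α β, a α ⬝ᵥ a β = G α β) (hG : IsUnit G.det)
    {n : m → K} (hn : ∀ β, a β ⬝ᵥ n = 0) (c : ι → K) (l : K) (α : ι) :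
    a α ⬝ᵥ frameVector G a n c l = c α := by
  rw [dotProduct_comm]
  simp only [frameVector, add_dotProduct, sum_dotProduct, smul_dotProduct,
    dualFrame_dotProduct hGram hG, dotProduct_comm n, hn, one_apply, smul_eq_mul, mul_ite,
    mul_one, mul_zero, Finset.sum_ite_eq', Finset.mem_univ, if_true, add_zero]

theorem frameVector_dotProduct_frameVector (hGram : ∀ α β, a α ⬝ᵥ a β = G α β)
    (hG : IsUnit G.det) {n : m → K} (hn : ∀ β, a β ⬝ᵥ n = 0) (hnn : n ⬝ᵥ n = 1)
    (c c' : ι → K) (l l' : K) :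
    frameVector G a n c l ⬝ᵥ frameVector G a n c' l' =
      ∑ σ, ∑ γ, G⁻¹ σ γ * c σ * c' γ + l * l' := by
  have hdn : ∀ σ, dualFrame G a σ ⬝ᵥ n = 0 := fun σ => by
    simp [dualFrame, sum_dotProduct, hn]
  simp only [frameVector, add_dotProduct, dotProduct_add, sum_dotProduct, dotProduct_sum,
    smul_dotProduct, dotProduct_smul, dualFrame_dotProduct_dualFrame hGram hG, hdn,
    dotProduct_comm n, hnn, smul_eq_mul, mul_zero, Finset.sum_const_zero, zero_add, add_zero,
    mul_one, Finset.mul_sum]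
  rw [Finset.sum_comm, mul_comm l']
  congr 1
  exact Finset.sum_congr rfl fun σ _ => Finset.sum_congr rfl fun γ _ => by ring

end DualFrame

section Smoothness

variable {𝕜 E ι m : Type*} [NontriviallyNormedField 𝕜] [NormedAddCommGroup E] [NormedSpace 𝕜 E]
  [Fintype ι] [DecidableEq ι] [Fintype m] {n : WithTop ℕ∞} {s : Set E}

theorem ContDiffOn.dotProduct {f g : E → m → 𝕜} (hf : ContDiffOn 𝕜 n f s)
    (hg : ContDiffOn 𝕜 n g s) : ContDiffOn 𝕜 n (fun x => f x ⬝ᵥ g x) s :=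
  ContDiffOn.sum fun i _ => (contDiffOn_pi.1 hf i).mul (contDiffOn_pi.1 hg i)

theorem ContDiffOn.matrix_det {M : E → Matrix ι ι 𝕜}
    (hM : ∀ i j, ContDiffOn 𝕜 n (fun x => M x i j) s) : ContDiffOn 𝕜 n (fun x => (M x).det) s := by
  simp only [det_apply]
  exact ContDiffOn.sum fun σ _ => (contDiffOn_prod fun i _ => hM _ _).const_smul _

theorem ContDiffOn.matrix_inv_apply {M : E → Matrix ι ι 𝕜}
    (hM : ∀ i j, ContDiffOn 𝕜 n (fun x => M x i j) s) (hdet : ∀ x ∈ s, (M x).det ≠ 0)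
    (i j : ι) : ContDiffOn 𝕜 n (fun x => (M x)⁻¹ i j) s := by
  have hadj : ContDiffOn 𝕜 n (fun x => (M x).adjugate i j) s := by
    simp only [adjugate_apply]
    refine ContDiffOn.matrix_det fun k l => ?_
    simp only [updateRow_apply]
    split_ifs
    exacts [contDiffOn_const, hM k l]
  simp only [inv_def, Ring.inverse_eq_inv, Matrix.smul_apply, smul_eq_mul]
  exact ((ContDiffOn.matrix_det hM).inv hdet).mul hadj

theorem fderiv_dotProduct_apply {f g : E → m → 𝕜} {x : E} (hf : DifferentiableAt 𝕜 f x)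
    (hg : DifferentiableAt 𝕜 g x) (v : E) :
    fderiv 𝕜 (fun y => f y ⬝ᵥ g y) x v = fderiv 𝕜 f x v ⬝ᵥ g x + f x ⬝ᵥ fderiv 𝕜 g x v := by
  have hf' := hasFDerivAt_pi'.1 hf.hasFDerivAt
  have hg' := hasFDerivAt_pi'.1 hg.hasFDerivAt
  show fderiv 𝕜 (fun y => ∑ i, f y i * g y i) x v = _
  rw [(HasFDerivAt.fun_sum fun i _ => (hf' i).fun_mul (hg' i)).fderiv]
  simp [dotProduct, Finset.sum_add_distrib, add_comm, mul_comm]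

theorem contDiffOn_frameVector {G : E → Matrix ι ι 𝕜} {a : ι → E → m → 𝕜} {v : E → m → 𝕜}
    {c : ι → E → 𝕜} {l : E → 𝕜} (hG : ∀ i j, ContDiffOn 𝕜 n (fun x => G x i j) s)
    (hdet : ∀ x ∈ s, (G x).det ≠ 0) (ha : ∀ β, ContDiffOn 𝕜 n (a β) s)
    (hv : ContDiffOn 𝕜 n v s) (hc : ∀ σ, ContDiffOn 𝕜 n (c σ) s) (hl : ContDiffOn 𝕜 n l s) :
    ContDiffOn 𝕜 n
      (fun x => frameVector (G x) (fun β => a β x) (v x) (fun σ => c σ x) (l x)) s :=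
  (ContDiffOn.sum fun σ _ => (hc σ).smul <| ContDiffOn.sum fun β _ =>
    (ContDiffOn.matrix_inv_apply hG hdet σ β).smul (ha β)).add (hl.smul hv)

end Smoothness

section EuclideanSpace3

theorem norm3_pos {w : Fin 3 → ℝ} (hw : w ≠ 0) : 0 < norm3 w :=
  Real.sqrt_pos.2 (lt_of_le_of_ne (dotProduct_self_star_nonneg w)
    (Ne.symm (mt dotProduct_self_eq_zero.1 hw)))

def unitNormal (u v : Fin 3 → ℝ) : Fin 3 → ℝ := (norm3 (u ⨯₃ v))⁻¹ • u ⨯₃ v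

theorem dotProduct_cross_eq_zero {R : Type*} [CommRing R] (a : Fin 2 → Fin 3 → R) (β : Fin 2) :
    a β ⬝ᵥ a 0 ⨯₃ a 1 = 0 := by
  fin_cases β
  exacts [dot_self_cross _ _, dot_cross_self _ _]

theorem dotProduct_unitNormal (a : Fin 2 → Fin 3 → ℝ) (β : Fin 2) :
    a β ⬝ᵥ unitNormal (a 0) (a 1) = 0 := by
  rw [unitNormal, dotProduct_smul, dotProduct_cross_eq_zero, smul_zero]

theorem unitNormal_dotProduct_cross (u v : Fin 3 → ℝ) :
    unitNormal u v ⬝ᵥ u ⨯₃ v = norm3 (u ⨯₃ v) := by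
  have hsq : norm3 (u ⨯₃ v) ^ 2 = u ⨯₃ v ⬝ᵥ u ⨯₃ v :=
    Real.sq_sqrt (dotProduct_self_star_nonneg _)
  rw [unitNormal, smul_dotProduct, smul_eq_mul, ← hsq]
  rcases eq_or_ne (norm3 (u ⨯₃ v)) 0 with h | h
  · simp [h]
  · field_simp

theorem unitNormal_dotProduct_self {u v : Fin 3 → ℝ} (h : u ⨯₃ v ≠ 0) :
    unitNormal u v ⬝ᵥ unitNormal u v = 1 := by
  rw [show unitNormal u v ⬝ᵥ unitNormal u v = (norm3 (u ⨯₃ v))⁻¹ • (unitNormal u v ⬝ᵥ u ⨯₃ v)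
    from dotProduct_smul _ _ _, unitNormal_dotProduct_cross, smul_eq_mul]
  exact inv_mul_cancel₀ (norm3_pos h).ne'

theorem ContDiffOn.crossProduct {E : Type*} [NormedAddCommGroup E] [NormedSpace ℝ E]
    {n : WithTop ℕ∞} {s : Set E} {u v : E → Fin 3 → ℝ} (hu : ContDiffOn ℝ n u s)
    (hv : ContDiffOn ℝ n v s) : ContDiffOn ℝ n (fun x => u x ⨯₃ v x) s := by
  have hu' := contDiffOn_pi.1 hu
  have hv' := contDiffOn_pi.1 hv
  refine contDiffOn_pi.2 fun i => ?_
  fin_cases i <;>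
    simp only [cross_apply, Fin.zero_eta, Fin.mk_one, Fin.reduceFinMk, Fin.isValue, cons_val] <;>
    exact ((hu' _).mul (hv' _)).sub ((hu' _).mul (hv' _))

theorem contDiffOn_unitNormal {E : Type*} [NormedAddCommGroup E] [NormedSpace ℝ E]
    {n : WithTop ℕ∞} {s : Set E} {u v : E → Fin 3 → ℝ} (hu : ContDiffOn ℝ n u s)
    (hv : ContDiffOn ℝ n v s) (h : ∀ x ∈ s, u x ⨯₃ v x ≠ 0) :
    ContDiffOn ℝ n (fun x => unitNormal (u x) (v x)) s := by
  have hw := hu.crossProduct hv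
  have hpos : ∀ x ∈ s, 0 < u x ⨯₃ v x ⬝ᵥ u x ⨯₃ v x := fun x hx =>
    Real.sqrt_pos.1 (norm3_pos (h x hx))
  exact (((hw.dotProduct hw).sqrt fun x hx => (hpos x hx).ne').inv
    fun x hx => (norm3_pos (h x hx)).ne').smul hw

end EuclideanSpace3

section CholeskyFrame

/-- The rows of the Cholesky factor of `G`, placed in the plane `x₃ = 0`. -/
def cholFrame (G : Matrix (Fin 2) (Fin 2) ℝ) : Fin 2 → Fin 3 → ℝ :=
  ![![√(G 0 0), 0, 0], ![G 0 1 / √(G 0 0), √G.det / √(G 0 0), 0]]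

variable {G : Matrix (Fin 2) (Fin 2) ℝ}

theorem cholFrame_dotProduct (hG : G.PosDef) (α β : Fin 2) :
    cholFrame G α ⬝ᵥ cholFrame G β = G α β := by
  have h00 : 0 < G 0 0 := hG.diag_pos
  have hsymm : G 1 0 = G 0 1 := by simpa using hG.isHermitian.apply 0 1
  have hs : √(G 0 0) ^ 2 = G 0 0 := Real.sq_sqrt h00.le
  have ht : √G.det ^ 2 = G.det := Real.sq_sqrt hG.det_pos.le
  have hs0 : √(G 0 0) ≠ 0 := (Real.sqrt_pos.2 h00).ne'
  have hdet : G.det = G 0 0 * G 1 1 - G 0 1 ^ 2 := by rw [det_fin_two, hsymm]; ring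
  fin_cases α <;> fin_cases β <;>
    simp only [cholFrame, dotProduct, Fin.sum_univ_three, Fin.isValue, Fin.zero_eta, Fin.mk_one,
      cons_val', cons_val_fin_one, cons_val_zero, cons_val_one, cons_val, mul_zero, zero_mul,
      add_zero] <;>
    field_simp
  exacts [hs, hsymm.symm, by rw [ht, hs, hdet]; ring]

theorem cross_cholFrame (hG : 0 < G 0 0) :
    cholFrame G 0 ⨯₃ cholFrame G 1 = ![0, 0, √G.det] := by
  have hs0 : √(G 0 0) ≠ 0 := (Real.sqrt_pos.2 hG).ne'
  ext k
  fin_cases k <;>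
    simp only [cholFrame, cross_apply, Fin.isValue, Fin.zero_eta, Fin.mk_one, Fin.reduceFinMk,
      cons_val_zero, cons_val_one, cons_val_fin_one, cons_val, mul_zero, zero_mul, sub_self,
      sub_zero]
  field_simp

theorem cholFrame_cross_ne_zero (hG : G.PosDef) : cholFrame G 0 ⨯₃ cholFrame G 1 ≠ 0 := by
  rw [cross_cholFrame hG.diag_pos]
  intro h
  exact (Real.sqrt_pos.2 hG.det_pos).ne' (congrFun h 2)

theorem contDiffOn_cholFrame {E : Type*} [NormedAddCommGroup E] [NormedSpace ℝ E]
    {n : WithTop ℕ∞} {s : Set E} {G : E → Matrix (Fin 2) (Fin 2) ℝ}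
    (hG : ∀ i j, ContDiffOn ℝ n (fun x => G x i j) s) (hpos : ∀ x ∈ s, (G x).PosDef) (α : Fin 2) :
    ContDiffOn ℝ n (fun x => cholFrame (G x) α) s := by
  have hs := (hG 0 0).sqrt fun x hx => (hpos x hx).diag_pos.ne'
  have hs0 : ∀ x ∈ s, √(G x 0 0) ≠ 0 := fun x hx => (Real.sqrt_pos.2 (hpos x hx).diag_pos).ne'
  have ht := (ContDiffOn.matrix_det hG).sqrt fun x hx => (hpos x hx).det_pos.ne'
  refine contDiffOn_pi.2 fun i => ?_
  fin_cases α <;> fin_cases i <;>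
    simp only [cholFrame, Fin.isValue, Fin.zero_eta, Fin.mk_one, Fin.reduceFinMk, cons_val',
      cons_val, cons_val_zero, cons_val_one, cons_val_fin_one]
  exacts [hs, contDiffOn_const, contDiffOn_const, (hG 0 1).div hs hs0, ht.div hs hs0,
    contDiffOn_const]

def cholFrameVector (G : Matrix (Fin 2) (Fin 2) ℝ) (c : Fin 2 → ℝ) (l : ℝ) : Fin 3 → ℝ :=
  frameVector G (cholFrame G) (unitNormal (cholFrame G 0) (cholFrame G 1)) c l

theorem cholFrame_dotProduct_cholFrameVector (hG : G.PosDef) (c : Fin 2 → ℝ) (l : ℝ)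
    (α : Fin 2) : cholFrame G α ⬝ᵥ cholFrameVector G c l = c α :=
  dotProduct_frameVector (cholFrame_dotProduct hG) hG.det_pos.ne'.isUnit
    (dotProduct_unitNormal _) c l α

theorem cholFrameVector_dotProduct_cholFrameVector (hG : G.PosDef) (c c' : Fin 2 → ℝ)
    (l l' : ℝ) : cholFrameVector G c l ⬝ᵥ cholFrameVector G c' l' =
      ∑ σ, ∑ γ, G⁻¹ σ γ * c σ * c' γ + l * l' :=
  frameVector_dotProduct_frameVector (cholFrame_dotProduct hG) hG.det_pos.ne'.isUnit
    (dotProduct_unitNormal _) (unitNormal_dotProduct_self (cholFrame_cross_ne_zero hG)) c c' l l'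

theorem cholFrameVector_dotProduct_cross_ne_zero (hG : G.PosDef) (c : Fin 2 → ℝ) {l : ℝ}
    (hl : l ≠ 0) : cholFrameVector G c l ⬝ᵥ cholFrame G 0 ⨯₃ cholFrame G 1 ≠ 0 := by
  rw [cholFrameVector, frameVector_dotProduct_of_forall_dotProduct_eq_zero
    (dotProduct_cross_eq_zero _), unitNormal_dotProduct_cross]
  exact mul_ne_zero hl (norm3_pos (cholFrame_cross_ne_zero hG)).ne'

theorem contDiffOn_cholFrameVector {E : Type*} [NormedAddCommGroup E] [NormedSpace ℝ E]
    {n : WithTop ℕ∞} {s : Set E} {G : E → Matrix (Fin 2) (Fin 2) ℝ} {c : Fin 2 → E → ℝ}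
    {l : E → ℝ} (hG : ∀ i j, ContDiffOn ℝ n (fun x => G x i j) s)
    (hpos : ∀ x ∈ s, (G x).PosDef) (hc : ∀ σ, ContDiffOn ℝ n (c σ) s)
    (hl : ContDiffOn ℝ n l s) :
    ContDiffOn ℝ n (fun x => cholFrameVector (G x) (fun σ => c σ x) (l x)) s :=
  contDiffOn_frameVector hG (fun x hx => (hpos x hx).det_pos.ne') (contDiffOn_cholFrame hG hpos)
    (contDiffOn_unitNormal (contDiffOn_cholFrame hG hpos 0) (contDiffOn_cholFrame hG hpos 1)
      fun x hx => cholFrame_cross_ne_zero (hpos x hx)) hc hl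

end CholeskyFrame

section MidSurface

variable {ω : Set (Fin 2 → ℝ)} {R : (Fin 2 → ℝ) → Fin 3 → ℝ} {m n : WithTop ℕ∞}

theorem contDiffOn_vpd2 {f : (Fin 2 → ℝ) → Fin 3 → ℝ} (hf : ContDiffOn ℝ n f ω) (hω : IsOpen ω)
    (hmn : m + 1 ≤ n) (α : Fin 2) : ContDiffOn ℝ m (vpd2 α f) ω :=
  (hf.fderiv_of_isOpen hω hmn).clm_apply contDiffOn_const

theorem cross_vpd2_ne_zero {θ : Fin 2 → ℝ} (h : Function.Injective (fderiv ℝ R θ)) :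
    vpd2 0 R θ ⨯₃ vpd2 1 R θ ≠ 0 := by
  rw [crossProduct_ne_zero_iff_linearIndependent]
  have hcomp : ![vpd2 0 R θ, vpd2 1 R θ] = fderiv ℝ R θ ∘ Pi.basisFun ℝ (Fin 2) := by
    ext i : 1
    fin_cases i <;> simp [vpd2]
  rw [hcomp]
  exact (Pi.basisFun ℝ (Fin 2)).linearIndependent.map' (fderiv ℝ R θ).toLinearMap
    (LinearMap.ker_eq_bot.2 h)

def secondFundamentalForm (R : (Fin 2 → ℝ) → Fin 3 → ℝ) (α β : Fin 2) (θ : Fin 2 → ℝ) : ℝ :=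
  -(vpd2 β (fun θ => unitNormal (vpd2 0 R θ) (vpd2 1 R θ)) θ ⬝ᵥ vpd2 α R θ)

theorem contDiffOn_unitNormal_vpd2 (hR : ContDiffOn ℝ n R ω) (hω : IsOpen ω) (hmn : m + 1 ≤ n)
    (himm : ∀ θ ∈ ω, Function.Injective (fderiv ℝ R θ)) :
    ContDiffOn ℝ m (fun θ => unitNormal (vpd2 0 R θ) (vpd2 1 R θ)) ω :=
  contDiffOn_unitNormal (contDiffOn_vpd2 hR hω hmn 0) (contDiffOn_vpd2 hR hω hmn 1)
    fun θ hθ => cross_vpd2_ne_zero (himm θ hθ)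

theorem contDiffOn_secondFundamentalForm (hR : ContDiffOn ℝ n R ω) (hω : IsOpen ω)
    (hmn : m + 2 ≤ n) (himm : ∀ θ ∈ ω, Function.Injective (fderiv ℝ R θ)) (α β : Fin 2) :
    ContDiffOn ℝ m (secondFundamentalForm R α β) ω := by
  have hmn' : m + 1 + 1 ≤ n := by rwa [add_assoc, one_add_one_eq_two]
  have hN := contDiffOn_unitNormal_vpd2 hR hω hmn' himm
  exact ((contDiffOn_vpd2 hN hω le_rfl β).dotProduct
    (contDiffOn_vpd2 hR hω (le_trans (by gcongr; exact le_self_add) hmn') α)).neg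

theorem secondFundamentalForm_eq (hR : ContDiffOn ℝ n R ω) (hω : IsOpen ω) (hn : 2 ≤ n)
    (himm : ∀ θ ∈ ω, Function.Injective (fderiv ℝ R θ)) {θ : Fin 2 → ℝ} (hθ : θ ∈ ω)
    (α β : Fin 2) :
    secondFundamentalForm R α β θ =
      fderiv ℝ (fderiv ℝ R) θ (Pi.single β 1) (Pi.single α 1) ⬝ᵥ
        unitNormal (vpd2 0 R θ) (vpd2 1 R θ) := by
  have h11 : (1 : WithTop ℕ∞) + 1 ≤ n := by rwa [one_add_one_eq_two]
  have hdiff : ∀ {f : (Fin 2 → ℝ) → Fin 3 → ℝ}, ContDiffOn ℝ 1 f ω → DifferentiableAt ℝ f θ :=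
    fun hf => (hf.contDiffAt (hω.mem_nhds hθ)).differentiableAt one_ne_zero
  have hdR : DifferentiableAt ℝ (fderiv ℝ R) θ :=
    ((hR.fderiv_of_isOpen hω h11).contDiffAt (hω.mem_nhds hθ)).differentiableAt one_ne_zero
  have hA : vpd2 β (vpd2 α R) θ = fderiv ℝ (fderiv ℝ R) θ (Pi.single β 1) (Pi.single α 1) := by
    change fderiv ℝ (fun y => fderiv ℝ R y (Pi.single α 1)) θ (Pi.single β 1) = _
    rw [fderiv_clm_apply hdR (differentiableAt_const _)]
    simp
  have hzero : (fun θ => vpd2 α R θ ⬝ᵥ unitNormal (vpd2 0 R θ) (vpd2 1 R θ)) = 0 := by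
    ext θ
    exact dotProduct_unitNormal (vpd2 · R θ) α
  have hderiv := fderiv_dotProduct_apply (hdiff (contDiffOn_vpd2 hR hω h11 α))
    (hdiff (contDiffOn_unitNormal_vpd2 hR hω h11 himm)) (Pi.single β 1)
  rw [hzero, fderiv_zero, Pi.zero_apply, _root_.zero_apply] at hderiv
  rw [secondFundamentalForm, ← hA, dotProduct_comm (vpd2 β _ θ)]
  simp only [vpd2] at hderiv ⊢
  linear_combination hderiv

theorem secondFundamentalForm_comm (hR : ContDiffOn ℝ n R ω) (hω : IsOpen ω) (hn : 2 ≤ n)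
    (himm : ∀ θ ∈ ω, Function.Injective (fderiv ℝ R θ)) {θ : Fin 2 → ℝ} (hθ : θ ∈ ω)
    (α β : Fin 2) : secondFundamentalForm R α β θ = secondFundamentalForm R β α θ := by
  have hsymm := (hR.contDiffAt (hω.mem_nhds hθ)).isSymmSndFDerivAt
    (by rwa [minSmoothness_of_isRCLikeNormedField])
  rw [secondFundamentalForm_eq hR hω hn himm hθ, secondFundamentalForm_eq hR hω hn himm hθ,
    hsymm]

end MidSurface

theorem stmt3_general
    -- the mid-surface domain
    (ω : Set (Fin 2 → ℝ)) (hωo : IsOpen ω)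
    -- the half-thickness
    (ht : ℝ)
    -- the mid-surface parametrization
    (R : (Fin 2 → ℝ) → Fin 3 → ℝ)
    (hRs : ContDiffOn ℝ (⊤ : ℕ∞) R ω)
    (hRimm : ∀ θ ∈ ω, Function.Injective (fderiv ℝ R θ))
    -- tangent vectors A_α, unit normal N, second fundamental form B_{αβ}
    (A : Fin 2 → (Fin 2 → ℝ) → Fin 3 → ℝ) (hA : ∀ α θ, A α θ = vpd2 α R θ)
    (N : (Fin 2 → ℝ) → Fin 3 → ℝ)
    (hN : ∀ θ, N θ = (norm3 (cross3 (A 0 θ) (A 1 θ)))⁻¹ • cross3 (A 0 θ) (A 1 θ))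
    (Bf : Fin 2 → Fin 2 → (Fin 2 → ℝ) → ℝ)
    (hBf : ∀ α β θ, Bf α β θ = -(dot3 (vpd2 β N θ) (A α θ)))
    -- the 2-d strain fields
    (E : Fin 2 → Fin 2 → (Fin 2 → ℝ) → ℝ)
    (Δv : Fin 2 → (Fin 2 → ℝ) → ℝ) (Δ : (Fin 2 → ℝ) → ℝ)
    (Λm : Fin 2 → Fin 2 → (Fin 2 → ℝ) → ℝ) (Λv : Fin 2 → (Fin 2 → ℝ) → ℝ)
    (hEs : ∀ α β, ContDiffOn ℝ (⊤ : ℕ∞) (E α β) ω)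
    (hΔvs : ∀ α, ContDiffOn ℝ (⊤ : ℕ∞) (Δv α) ω)
    (hΔs : ContDiffOn ℝ (⊤ : ℕ∞) Δ ω)
    (hΛms : ∀ α β, ContDiffOn ℝ (⊤ : ℕ∞) (Λm α β) ω)
    (hΛvs : ∀ α, ContDiffOn ℝ (⊤ : ℕ∞) (Λv α) ω)
    (hΔne : ∀ θ ∈ ω, Δ θ ≠ -1)
    -- a_{αβ} := A_{αβ} + 2E_{αβ}, positive definite
    (amat : (Fin 2 → ℝ) → Matrix (Fin 2) (Fin 2) ℝ)
    (hamat : ∀ θ α β, amat θ α β = dot3 (A α θ) (A β θ) + 2 * E α β θ)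
    (hapos : ∀ θ ∈ ω, (amat θ).PosDef)
    -- the coefficient fields P, Q, U, V of the shell metric
    (P : Fin 2 → Fin 2 → (Fin 2 → ℝ) → ℝ)
    (hP : ∀ α β θ, P α β θ = 2 * ((Λm α β θ + Λm β α θ) / 2 - Bf α β θ))
    (Q : Fin 2 → Fin 2 → (Fin 2 → ℝ) → ℝ)
    (hQ : ∀ α β θ, Q α β θ =
      (∑ σ, ∑ γ, (amat θ)⁻¹ σ γ * (Λm σ α θ - Bf σ α θ) * (Λm γ β θ - Bf γ β θ))
        + Λv α θ * Λv β θ)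
    (U : Fin 2 → (Fin 2 → ℝ) → ℝ)
    (hU : ∀ α θ, U α θ =
      (∑ σ, ∑ γ, (amat θ)⁻¹ σ γ * Δv σ θ * (Λm γ α θ - Bf γ α θ)) + Λv α θ * (Δ θ + 1))
    (V : (Fin 2 → ℝ) → ℝ)
    (hV : ∀ θ, V θ = (∑ α, ∑ β, (amat θ)⁻¹ α β * Δv α θ * Δv β θ) + (Δ θ + 1) ^ 2)
    -- the shell metric
    (gm : (Fin 2 → ℝ) → ℝ → Matrix (Fin 3) (Fin 3) ℝ)
    (hgmab : ∀ θ ζ (α β : Fin 2), gm θ ζ α.castSucc β.castSucc =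
      amat θ α β + ζ * P α β θ + ζ ^ 2 * Q α β θ)
    (hgma3 : ∀ θ ζ (α : Fin 2), gm θ ζ α.castSucc 2 = Δv α θ + ζ * U α θ)
    (hgm3a : ∀ θ ζ (α : Fin 2), gm θ ζ 2 α.castSucc = Δv α θ + ζ * U α θ)
    (hgm33 : ∀ θ ζ, gm θ ζ 2 2 = V θ) :
    ∃ a : Fin 2 → (Fin 2 → ℝ) → Fin 3 → ℝ, ∃ D : Fin 2 → (Fin 2 → ℝ) → Fin 3 → ℝ,
      ∃ d : (Fin 2 → ℝ) → Fin 3 → ℝ,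
      (∀ α, ContDiffOn ℝ (⊤ : ℕ∞) (a α) ω) ∧
      (∀ α, ContDiffOn ℝ (⊤ : ℕ∞) (D α) ω) ∧
      ContDiffOn ℝ (⊤ : ℕ∞) d ω ∧
      (∀ θ ∈ ω, cross3 (a 0 θ) (a 1 θ) ≠ 0) ∧
      (∀ θ ∈ ω, dot3 (d θ) (cross3 (a 0 θ) (a 1 θ)) ≠ 0) ∧
      -- a_α · a_β = a_{αβ}
      (∀ θ ∈ ω, ∀ α β : Fin 2, dot3 (a α θ) (a β θ) = amat θ α β) ∧
      -- D_α = (Λ_{σα} − B_{σα}) a^σ + Λ_α n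
      (∀ θ ∈ ω, ∀ α : Fin 2, D α θ =
        (∑ σ, (Λm σ α θ - Bf σ α θ) • (∑ β, (amat θ)⁻¹ σ β • a β θ))
          + Λv α θ • ((norm3 (cross3 (a 0 θ) (a 1 θ)))⁻¹ • cross3 (a 0 θ) (a 1 θ))) ∧
      -- d = Δ_σ a^σ + (Δ + 1) n
      (∀ θ ∈ ω, d θ =
        (∑ σ, Δv σ θ • (∑ β, (amat θ)⁻¹ σ β • a β θ))
          + (Δ θ + 1) • ((norm3 (cross3 (a 0 θ) (a 1 θ)))⁻¹ • cross3 (a 0 θ) (a 1 θ))) ∧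
      -- ĝ_i · ĝ_j = g_{ij} at every point of Ω
      (∀ θ ∈ ω, ∀ ζ ∈ Ioo (-ht) ht, ∀ i j : Fin 3,
        dot3 (![a 0 θ + ζ • D 0 θ, a 1 θ + ζ • D 1 θ, d θ] i)
             (![a 0 θ + ζ • D 0 θ, a 1 θ + ζ • D 1 θ, d θ] j) = gm θ ζ i j) := by
  obtain rfl : A = fun α θ => vpd2 α R θ := funext₂ hA
  obtain rfl : N = fun θ => unitNormal (vpd2 0 R θ) (vpd2 1 R θ) := funext hN
  obtain rfl : Bf = secondFundamentalForm R := funext fun α => funext₂ (hBf α)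
  have hG : ∀ α β, ContDiffOn ℝ (⊤ : ℕ∞) (fun θ => amat θ α β) ω := fun α β => by
    simp only [hamat]
    exact ((contDiffOn_vpd2 hRs hωo (by norm_cast) α).dotProduct
      (contDiffOn_vpd2 hRs hωo (by norm_cast) β)).add (contDiffOn_const.mul (hEs α β))
  have hB : ∀ α β, ContDiffOn ℝ (⊤ : ℕ∞) (secondFundamentalForm R α β) ω :=
    contDiffOn_secondFundamentalForm hRs hωo (by norm_cast) hRimm
  obtain ⟨D, hD⟩ : ∃ D : Fin 2 → (Fin 2 → ℝ) → Fin 3 → ℝ, ∀ α θ, D α θ =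
      cholFrameVector (amat θ) (fun σ => Λm σ α θ - secondFundamentalForm R σ α θ) (Λv α θ) :=
    ⟨_, fun _ _ => rfl⟩
  obtain ⟨d, hd⟩ : ∃ d : (Fin 2 → ℝ) → Fin 3 → ℝ, ∀ θ, d θ =
      cholFrameVector (amat θ) (Δv · θ) (Δ θ + 1) := ⟨_, fun _ => rfl⟩
  refine ⟨fun α θ => cholFrame (amat θ) α, D, d, contDiffOn_cholFrame hG hapos,
    fun α => (contDiffOn_cholFrameVector hG hapos (fun σ => (hΛms σ α).sub (hB σ α))
      (hΛvs α)).congr fun θ _ => hD α θ,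
    (contDiffOn_cholFrameVector hG hapos hΔvs (hΔs.add contDiffOn_const)).congr fun θ _ => hd θ,
    fun θ hθ => cholFrame_cross_ne_zero (hapos θ hθ),
    fun θ hθ => hd θ ▸ cholFrameVector_dotProduct_cross_ne_zero (hapos θ hθ) _
      fun h => hΔne θ hθ (eq_neg_of_add_eq_zero_left h),
    fun θ hθ => cholFrame_dotProduct (hapos θ hθ), fun θ _ α => hD α θ, fun θ _ => hd θ,
    fun θ hθ ζ _ => vecCons_three_gram (x := fun α => cholFrame (amat θ) α + ζ • D α θ)
      (fun α β => ?_) (fun α => ?_) (fun α => ?_) ?_⟩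
  · rw [hgmab, hP, hQ, dotProduct_add_smul_add_smul, dotProduct_comm (D α θ), hD, hD,
      cholFrame_dotProduct (hapos θ hθ), cholFrame_dotProduct_cholFrameVector (hapos θ hθ),
      cholFrame_dotProduct_cholFrameVector (hapos θ hθ),
      cholFrameVector_dotProduct_cholFrameVector (hapos θ hθ),
      secondFundamentalForm_comm hRs hωo (by norm_cast) hRimm hθ β α]
    ring
  · rw [hgma3, hU, add_dotProduct, smul_dotProduct, dotProduct_comm (D α θ), hd, hD,
      cholFrame_dotProduct_cholFrameVector (hapos θ hθ),
      cholFrameVector_dotProduct_cholFrameVector (hapos θ hθ)]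
    ring
  · rw [hgm3a, hU, dotProduct_add, dotProduct_smul, dotProduct_comm (d θ), hd, hD,
      cholFrame_dotProduct_cholFrameVector (hapos θ hθ),
      cholFrameVector_dotProduct_cholFrameVector (hapos θ hθ)]
    ring
  · rw [hgm33, hV, hd, cholFrameVector_dotProduct_cholFrameVector (hapos θ hθ)]
    ring

/-- Theorem 3.1(i): the shell metric built from the 2-d strain measures is the Gram matrix
of a Cosserat-type frame `ĝ_α = a_α + ζ D_α`, `ĝ_3 = d` with the stated representations of
`D_α` and `d`. -/
theorem stmt3
    -- the mid-surface domain
    (ω : Set (Fin 2 → ℝ)) (hωo : IsOpen ω) (hωb : Bornology.IsBounded ω)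
    (hωsc : SimplyConnectedSpace ω)
    -- the half-thickness
    (ht : ℝ) (hht : 0 < ht)
    -- the mid-surface parametrization
    (R : (Fin 2 → ℝ) → Fin 3 → ℝ)
    (hRs : ContDiffOn ℝ (⊤ : ℕ∞) R ω) (hRinj : Set.InjOn R ω)
    (hRimm : ∀ θ ∈ ω, Function.Injective (fderiv ℝ R θ))
    -- tangent vectors A_α, unit normal N, second fundamental form B_{αβ}
    (A : Fin 2 → (Fin 2 → ℝ) → Fin 3 → ℝ) (hA : ∀ α θ, A α θ = vpd2 α R θ)
    (N : (Fin 2 → ℝ) → Fin 3 → ℝ)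
    (hN : ∀ θ, N θ = (norm3 (cross3 (A 0 θ) (A 1 θ)))⁻¹ • cross3 (A 0 θ) (A 1 θ))
    (Bf : Fin 2 → Fin 2 → (Fin 2 → ℝ) → ℝ)
    (hBf : ∀ α β θ, Bf α β θ = -(dot3 (vpd2 β N θ) (A α θ)))
    -- the 2-d strain fields
    (E : Fin 2 → Fin 2 → (Fin 2 → ℝ) → ℝ)
    (Δv : Fin 2 → (Fin 2 → ℝ) → ℝ) (Δ : (Fin 2 → ℝ) → ℝ)
    (Λm : Fin 2 → Fin 2 → (Fin 2 → ℝ) → ℝ) (Λv : Fin 2 → (Fin 2 → ℝ) → ℝ)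
    (hEs : ∀ α β, ContDiffOn ℝ (⊤ : ℕ∞) (E α β) ω)
    (hΔvs : ∀ α, ContDiffOn ℝ (⊤ : ℕ∞) (Δv α) ω)
    (hΔs : ContDiffOn ℝ (⊤ : ℕ∞) Δ ω)
    (hΛms : ∀ α β, ContDiffOn ℝ (⊤ : ℕ∞) (Λm α β) ω)
    (hΛvs : ∀ α, ContDiffOn ℝ (⊤ : ℕ∞) (Λv α) ω)
    (hEsym : ∀ α β θ, E α β θ = E β α θ)
    (hΔne : ∀ θ ∈ ω, Δ θ ≠ -1)
    -- a_{αβ} := A_{αβ} + 2E_{αβ}, positive definite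
    (amat : (Fin 2 → ℝ) → Matrix (Fin 2) (Fin 2) ℝ)
    (hamat : ∀ θ α β, amat θ α β = dot3 (A α θ) (A β θ) + 2 * E α β θ)
    (hapos : ∀ θ ∈ ω, (amat θ).PosDef)
    -- the coefficient fields P, Q, U, V of the shell metric
    (P : Fin 2 → Fin 2 → (Fin 2 → ℝ) → ℝ)
    (hP : ∀ α β θ, P α β θ = 2 * ((Λm α β θ + Λm β α θ) / 2 - Bf α β θ))
    (Q : Fin 2 → Fin 2 → (Fin 2 → ℝ) → ℝ)
    (hQ : ∀ α β θ, Q α β θ =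
      (∑ σ, ∑ γ, (amat θ)⁻¹ σ γ * (Λm σ α θ - Bf σ α θ) * (Λm γ β θ - Bf γ β θ))
        + Λv α θ * Λv β θ)
    (U : Fin 2 → (Fin 2 → ℝ) → ℝ)
    (hU : ∀ α θ, U α θ =
      (∑ σ, ∑ γ, (amat θ)⁻¹ σ γ * Δv σ θ * (Λm γ α θ - Bf γ α θ)) + Λv α θ * (Δ θ + 1))
    (V : (Fin 2 → ℝ) → ℝ)
    (hV : ∀ θ, V θ = (∑ α, ∑ β, (amat θ)⁻¹ α β * Δv α θ * Δv β θ) + (Δ θ + 1) ^ 2)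
    -- the shell metric
    (gm : (Fin 2 → ℝ) → ℝ → Matrix (Fin 3) (Fin 3) ℝ)
    (hgmab : ∀ θ ζ (α β : Fin 2), gm θ ζ α.castSucc β.castSucc =
      amat θ α β + ζ * P α β θ + ζ ^ 2 * Q α β θ)
    (hgma3 : ∀ θ ζ (α : Fin 2), gm θ ζ α.castSucc 2 = Δv α θ + ζ * U α θ)
    (hgm3a : ∀ θ ζ (α : Fin 2), gm θ ζ 2 α.castSucc = Δv α θ + ζ * U α θ)
    (hgm33 : ∀ θ ζ, gm θ ζ 2 2 = V θ)
    (hgpos : ∀ θ ∈ ω, ∀ ζ ∈ Ioo (-ht) ht, (gm θ ζ).PosDef) :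
    ∃ a : Fin 2 → (Fin 2 → ℝ) → Fin 3 → ℝ, ∃ D : Fin 2 → (Fin 2 → ℝ) → Fin 3 → ℝ,
      ∃ d : (Fin 2 → ℝ) → Fin 3 → ℝ,
      (∀ α, ContDiffOn ℝ (⊤ : ℕ∞) (a α) ω) ∧
      (∀ α, ContDiffOn ℝ (⊤ : ℕ∞) (D α) ω) ∧
      ContDiffOn ℝ (⊤ : ℕ∞) d ω ∧
      (∀ θ ∈ ω, cross3 (a 0 θ) (a 1 θ) ≠ 0) ∧
      (∀ θ ∈ ω, dot3 (d θ) (cross3 (a 0 θ) (a 1 θ)) ≠ 0) ∧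
      -- a_α · a_β = a_{αβ}
      (∀ θ ∈ ω, ∀ α β : Fin 2, dot3 (a α θ) (a β θ) = amat θ α β) ∧
      -- D_α = (Λ_{σα} − B_{σα}) a^σ + Λ_α n
      (∀ θ ∈ ω, ∀ α : Fin 2, D α θ =
        (∑ σ, (Λm σ α θ - Bf σ α θ) • (∑ β, (amat θ)⁻¹ σ β • a β θ))
          + Λv α θ • ((norm3 (cross3 (a 0 θ) (a 1 θ)))⁻¹ • cross3 (a 0 θ) (a 1 θ))) ∧
      -- d = Δ_σ a^σ + (Δ + 1) n
      (∀ θ ∈ ω, d θ =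
        (∑ σ, Δv σ θ • (∑ β, (amat θ)⁻¹ σ β • a β θ))
          + (Δ θ + 1) • ((norm3 (cross3 (a 0 θ) (a 1 θ)))⁻¹ • cross3 (a 0 θ) (a 1 θ))) ∧
      -- ĝ_i · ĝ_j = g_{ij} at every point of Ω
      (∀ θ ∈ ω, ∀ ζ ∈ Ioo (-ht) ht, ∀ i j : Fin 3,
        dot3 (![a 0 θ + ζ • D 0 θ, a 1 θ + ζ • D 1 θ, d θ] i)
             (![a 0 θ + ζ • D 0 θ, a 1 θ + ζ • D 1 θ, d θ] j) = gm θ ζ i j) :=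
  stmt3_general ω hωo ht R hRs hRimm A hA N hN Bf hBf E Δv Δ Λm Λv hEs hΔvs hΔs hΛms hΛvs hΔne amat
    hamat hapos P hP Q hQ U hU V hV gm hgmab hgma3 hgm3a hgm33
end
end

section
/- Let B be an open subset of ℝ³ and let [Q_{ij}] : B → ℝ^{3×3} be a smooth matrix field such that Q(x) is an orthogonal matrix for every x ∈ B (so that Q⁻¹ = Qᵀ). Define C^q_{ij} := Q_{lq} ∂_j Q_{li} (summation over l). Then ∂_k C^i_{jl} − ∂_l C^i_{jk} + C^h_{jl} C^i_{hk} − C^h_{jk} C^i_{hl} = 0 at every point of B, for all indices i,j,k,l; that is, C is a solution of the curvature equation with vanishing total curvature. -/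
/-!
Write `A_v = Qᵀ ∂_v Q`, so that `C^q_{ij}` is the `(q, i)` entry of `A_{e_j}`; the claim is the
flatness `∂_u A_v - ∂_v A_u + A_u A_v - A_v A_u = 0` of this Maurer–Cartan form. By the product
rule `∂_u A_v = (∂_u Q)ᵀ ∂_v Q + Qᵀ ∂_u ∂_v Q`, and the second-derivative term is symmetric in
`u, v`. Differentiating `Qᵀ Q = 1` shows that `A_u` is skew, i.e. `Qᵀ ∂_u Q = -(∂_u Q)ᵀ Q`;
as also `Q Qᵀ = 1`, this gives `A_u A_v = -(∂_u Q)ᵀ ∂_v Q`, which cancels the remaining terms.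
-/

open Set
open scoped BigOperators

noncomputable section

def pd3 (k : Fin 3) (f : (Fin 3 → ℝ) → ℝ) (x : Fin 3 → ℝ) : ℝ :=
  fderiv ℝ f x (Pi.single k 1)

open Filter Topology
open scoped Matrix

theorem Matrix.transpose_mul_mul_transpose_mul {ι R : Type*} [Fintype ι] [DecidableEq ι]
    [CommRing R] {Q D₁ : Matrix ι ι R} (D₂ : Matrix ι ι R) (hQ : Qᵀ * Q = 1)
    (hD₁ : (Qᵀ * D₁)ᵀ = -(Qᵀ * D₁)) :
    Qᵀ * D₁ * (Qᵀ * D₂) = -(D₁ᵀ * D₂) := by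
  have hQ' : Q * Qᵀ = 1 := mul_eq_one_comm.mp hQ
  rw [← neg_eq_iff_eq_neg.mpr hD₁, Matrix.transpose_mul, Matrix.transpose_transpose, neg_mul,
    Matrix.mul_assoc, ← Matrix.mul_assoc Q, hQ', Matrix.one_mul]

section

variable {E : Type*} [NormedAddCommGroup E] [NormedSpace ℝ E] {x : E}

theorem differentiableAt_fderiv_apply {f : E → ℝ} (hf : ContDiffAt ℝ 2 f x) (v : E) :
    DifferentiableAt ℝ (fun y => fderiv ℝ f y v) x :=
  ((hf.fderiv_right (m := 1) (by norm_num)).differentiableAt one_ne_zero).clm_apply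
    (differentiableAt_const v)

theorem fderiv_fderiv_apply_comm {f : E → ℝ} (hf : ContDiffAt ℝ 2 f x) (u v : E) :
    fderiv ℝ (fun y => fderiv ℝ f y v) x u = fderiv ℝ (fun y => fderiv ℝ f y u) x v := by
  have hf' : DifferentiableAt ℝ (fderiv ℝ f) x :=
    (hf.fderiv_right (m := 1) (by norm_num)).differentiableAt one_ne_zero
  have hsymm : IsSymmSndFDerivAt ℝ f x := hf.isSymmSndFDerivAt (by simp)
  simp only [fderiv_clm_apply hf' (differentiableAt_const _), fderiv_const_apply,
    ContinuousLinearMap.comp_zero, zero_add, ContinuousLinearMap.flip_apply]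
  exact hsymm u v

variable {ι : Type*} [Fintype ι]

theorem fderiv_sum_mul_apply {f g : ι → E → ℝ} (hf : ∀ m, DifferentiableAt ℝ (f m) x)
    (hg : ∀ m, DifferentiableAt ℝ (g m) x) (u : E) :
    fderiv ℝ (fun y => ∑ m, f m y * g m y) x u
      = ∑ m, (fderiv ℝ (f m) x u * g m x + f m x * fderiv ℝ (g m) x u) := by
  rw [fderiv_fun_sum (A := fun m y => f m y * g m y) fun m _ => (hf m).mul (hg m), sum_apply]
  refine Finset.sum_congr rfl fun m _ => ?_
  rw [fderiv_fun_mul (hf m) (hg m)]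
  simp only [add_apply, smul_apply, smul_eq_mul]
  ring

def derivMatrix (M : E → Matrix ι ι ℝ) (u : E) (x : E) : Matrix ι ι ℝ :=
  Matrix.of fun a b => fderiv ℝ (fun y => M y a b) x u

def maurerCartanForm (Q : E → Matrix ι ι ℝ) (v : E) (x : E) : Matrix ι ι ℝ :=
  (Q x)ᵀ * derivMatrix Q v x

variable {Q : E → Matrix ι ι ℝ}

theorem derivMatrix_maurerCartanForm (hQ : ∀ a b, ContDiffAt ℝ 2 (fun y => Q y a b) x)
    (u v : E) :
    derivMatrix (maurerCartanForm Q v) u x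
      = (derivMatrix Q u x)ᵀ * derivMatrix Q v x + (Q x)ᵀ * derivMatrix (derivMatrix Q v) u x := by
  ext a b
  have h := fderiv_sum_mul_apply (fun m => (hQ m a).differentiableAt two_ne_zero)
    (fun m => differentiableAt_fderiv_apply (hQ m b) v) u
  simpa [maurerCartanForm, derivMatrix, Matrix.mul_apply, Finset.sum_add_distrib] using h

variable [DecidableEq ι]

theorem maurerCartanForm_transpose (hQ : ∀ᶠ y in 𝓝 x, (Q y)ᵀ * Q y = 1)
    (hd : ∀ a b, DifferentiableAt ℝ (fun y => Q y a b) x) (u : E) :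
    (maurerCartanForm Q u x)ᵀ = -maurerCartanForm Q u x := by
  rw [eq_neg_iff_add_eq_zero]
  ext a b
  have hconst :
      (fun y => ∑ m, Q y m a * Q y m b) =ᶠ[𝓝 x] fun _ => ((1 : Matrix ι ι ℝ) a b : ℝ) := by
    filter_upwards [hQ] with y hy
    simpa [Matrix.mul_apply] using congrFun (congrFun hy a) b
  have h := fderiv_sum_mul_apply (fun m => hd m a) (fun m => hd m b) u
  rw [hconst.fderiv_eq, fderiv_const_apply, zero_apply] at h
  simpa [maurerCartanForm, derivMatrix, Matrix.mul_apply, Finset.sum_add_distrib] using h.symm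

theorem maurerCartanForm_curvature_eq_zero (hQ : ∀ᶠ y in 𝓝 x, (Q y)ᵀ * Q y = 1)
    (hs : ∀ a b, ContDiffAt ℝ 2 (fun y => Q y a b) x) (u v : E) :
    derivMatrix (maurerCartanForm Q v) u x - derivMatrix (maurerCartanForm Q u) v x
      + maurerCartanForm Q u x * maurerCartanForm Q v x
      - maurerCartanForm Q v x * maurerCartanForm Q u x = 0 := by
  have hd : ∀ a b, DifferentiableAt ℝ (fun y => Q y a b) x :=
    fun a b => (hs a b).differentiableAt two_ne_zero
  have hsymm : derivMatrix (derivMatrix Q v) u x = derivMatrix (derivMatrix Q u) v x := by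
    ext a b
    exact fderiv_fderiv_apply_comm (hs a b) u v
  have hsq : ∀ w w', maurerCartanForm Q w x * maurerCartanForm Q w' x
      = -((derivMatrix Q w x)ᵀ * derivMatrix Q w' x) := fun w w' =>
    Matrix.transpose_mul_mul_transpose_mul _ hQ.self_of_nhds (maurerCartanForm_transpose hQ hd w)
  rw [derivMatrix_maurerCartanForm hs, derivMatrix_maurerCartanForm hs, hsymm, hsq, hsq]
  abel

end

/-- The contorsion field `C^q_{ij} := Q_{lq} ∂_j Q_{li}` built from a smooth orthogonal
matrix field is a solution of the curvature equation with vanishing total curvature. -/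
theorem stmt9
    (B : Set (Fin 3 → ℝ)) (hBopen : IsOpen B)
    (Q : Fin 3 → Fin 3 → (Fin 3 → ℝ) → ℝ)
    (hQs : ∀ i j, ContDiffOn ℝ (⊤ : ℕ∞) (Q i j) B)
    (hQorth : ∀ x ∈ B, ∀ i j : Fin 3,
      (∑ l, Q l i x * Q l j x) = if i = j then (1 : ℝ) else 0)
    (C : Fin 3 → Fin 3 → Fin 3 → (Fin 3 → ℝ) → ℝ)
    (hC : ∀ q i j x, C q i j x = ∑ l, Q l q x * pd3 j (Q l i) x) :
    ∀ x ∈ B, ∀ i j k l : Fin 3,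
      pd3 k (C i j l) x - pd3 l (C i j k) x
        + (∑ m, C m j l x * C i m k x) - (∑ m, C m j k x * C i m l x) = 0 := by
  intro x hx i j k l
  set M : (Fin 3 → ℝ) → Matrix (Fin 3) (Fin 3) ℝ := fun y => Matrix.of fun a b => Q a b y
  have hM : ∀ᶠ y in 𝓝 x, (M y)ᵀ * M y = 1 := by
    filter_upwards [hBopen.mem_nhds hx] with y hy
    ext a b
    simpa [M, Matrix.mul_apply, Matrix.one_apply] using hQorth y hy a b
  have hs : ∀ a b, ContDiffAt ℝ 2 (fun y => M y a b) x := fun a b =>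
    ((hQs a b).contDiffAt (hBopen.mem_nhds hx)).of_le (WithTop.coe_le_coe.2 le_top)
  have hCM : ∀ q i j, C q i j = fun y => maurerCartanForm M (Pi.single j 1) y q i := by
    intro q i j
    funext y
    simp [hC, M, maurerCartanForm, derivMatrix, Matrix.mul_apply, pd3]
  have h := congrFun (congrFun
    (maurerCartanForm_curvature_eq_zero hM hs (Pi.single k 1) (Pi.single l 1)) i) j
  simp only [hCM, pd3]
  simpa [derivMatrix, Matrix.mul_apply, mul_comm] using h
end
end
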